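/- Let n ≥ 2 and r ≥ 1 be integers, m = r·n, and let S' ∈ [n]^m be the concatenation of r copies of the sequence (1, 2, …, n). Then the working-set bound satisfies WS(S') ≥ (m − n)·log₂ n, while there exists a binary search tree T on [n] with one-finger cost F^1_T(S') ≤ 3m. -/

import Mathlib

/-- Binary trees with node labels of type `α`. -/
inductive BTree (α : Type) : Type where
  | leaf : BTree α
  | node : BTree α → α → BTree α → BTree α

namespace BTree

variable {α : Type} [LinearOrder α]

/-- The set of keys (node labels) of a binary tree. -/
def keys : BTree α → Finset α
  | .leaf => ∅
  | .node l x r => insert x (keys l ∪ keys r)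

/-- The binary-search-tree property: every node's label is greater than all labels
in its left subtree and smaller than all labels in its right subtree. -/
def IsBST : BTree α → Prop
  | .leaf => True
  | .node l x r => (∀ y ∈ keys l, y < x) ∧ (∀ y ∈ keys r, x < y) ∧ IsBST l ∧ IsBST r

/-- Depth (edge-distance from the root) of the node labeled `a` in a BST. -/
def depth : BTree α → α → ℕ
  | .leaf, _ => 0
  | .node l x r, a => if a = x then 0 else if a < x then depth l a + 1 else depth r a + 1

/-- Edge-distance between the nodes labeled `a` and `b` in a BST. -/
def dist : BTree α → α → α → ℕ
  | .leaf, _, _ => 0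
  | .node l x r, a, b =>
      if a = b then 0
      else if a < x ∧ b < x then dist l a b
      else if x < a ∧ x < b then dist r a b
      else depth (node l x r) a + depth (node l x r) b

/-- The key at the root, if any. -/
def root? : BTree α → Option α
  | .leaf => none
  | .node _ x _ => some x

end BTree


/-- `fingerPos X f init i t` is the position of finger `i` just before (0-indexed) time `t`:
the initial position `init i` if finger `i` has served no access so far, and otherwise
the last key it served. Here `f s` is the finger serving the access `X s`. -/
def fingerPos {α : Type} {k : ℕ} (X : ℕ → α) (f : ℕ → Fin k) (init : Fin k → α)
    (i : Fin k) : ℕ → α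
  | 0 => init i
  | t + 1 => if f t = i then X t else fingerPos X f init i t

/-- The cost of the `k`-finger strategy `(f, init)` serving the accesses
`X 0, …, X (m-1)` in the tree `T`: at each time we pay `1` plus the distance
travelled by the serving finger. -/
def fingerCost {α : Type} [LinearOrder α] (T : BTree α) (k m : ℕ) (X : ℕ → α)
    (f : ℕ → Fin k) (init : Fin k → α) : ℕ :=
  ∑ t ∈ Finset.range m, (1 + T.dist (fingerPos X f init (f t) t) (X t))

/-- `F^k_T(X)`: the optimal cost of serving `X 0, …, X (m-1)` in `T` with `k` fingers. -/
noncomputable def fingerOpt {α : Type} [LinearOrder α] (T : BTree α) (k m : ℕ)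
    (X : ℕ → α) : ℕ :=
  sInf {c : ℕ | ∃ (f : ℕ → Fin k) (init : Fin k → α), fingerCost T k m X f init = c}

/-- `lastOcc x t a`: the largest index `s < t` (with `s ≥ 1`) such that `x s = a`,
and `0` if there is no such index. -/
def lastOcc (x : ℕ → ℕ) (t a : ℕ) : ℕ :=
  WithBot.unbotD 0 (((Finset.Ico 1 t).filter (fun s => x s = a)).max)

/-- `ρ_t(a)`: the number of distinct keys among `x (s+1), …, x t`, where `s` is the last
occurrence of `a` strictly before time `t` (and `s = 0` if `a` does not occur before `t`). -/
def rho (x : ℕ → ℕ) (t a : ℕ) : ℕ :=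
  ((Finset.Icc (lastOcc x t a + 1) t).image x).card

/-- The working-set bound `WS(x) = Σ_{t=1}^m log₂(max(2, ρ_t(x t)))` of the 1-indexed
access sequence `x 1, …, x m`. -/
noncomputable def wsBound (m : ℕ) (x : ℕ → ℕ) : ℝ :=
  ∑ t ∈ Finset.Icc 1 m, Real.logb 2 ((max 2 (rho x t (x t)) : ℕ) : ℝ)


/-! In the cyclic sequence, from the second round on, the accesses since the previous access to
the same key form one full round, which touches all `n` keys; so each such access contributes
`log₂ n` to the working-set bound. In the path `1 — 2 — ⋯ — n` a single finger serving the cyclic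
sequence moves one step per access, except once per round when it walks back from `n` to `1`;
a round thus costs at most `n + 2(n - 1) ≤ 3n`. -/

open Finset

section WorkingSet

variable {x : ℕ → ℕ} {n t : ℕ}

lemma lastOcc_eq_of_forall_ne {s a : ℕ} (hs : 1 ≤ s) (hst : s < t) (hxs : x s = a)
    (hne : ∀ u, s < u → u < t → x u ≠ a) : lastOcc x t a = s := by
  have hmax : ((Ico 1 t).filter (fun u => x u = a)).max = (s : WithBot ℕ) := by
    refine le_antisymm (Finset.max_le fun u hu => ?_) (Finset.le_max (by simp [*]))
    simp only [mem_filter, mem_Ico] at hu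
    exact WithBot.coe_le_coe.mpr (not_lt.mp fun hsu => hne u hsu hu.1.2 hu.2)
  simp [lastOcc, hmax]

lemma rho_eq_of_periodic (hn : 0 < n) (hper : ∀ s, 1 ≤ s → x (s + n) = x s)
    (hinj : ∀ s, 1 ≤ s → Set.InjOn x (Set.Ico s (s + n))) (ht : n < t) :
    rho x t (x t) = n := by
  have hwin : Set.InjOn x (Icc (t - n + 1) t) :=
    (hinj (t - n + 1) le_add_self).mono fun u hu => by
      simp only [coe_Icc, Set.mem_Icc, Set.mem_Ico] at hu ⊢; omega
  have hlast : lastOcc x t (x t) = t - n := by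
    refine lastOcc_eq_of_forall_ne (by omega) (by omega) ?_ fun u hu hut hxu => ?_
    · simpa [show t - n + n = t by omega] using (hper (t - n) (by omega)).symm
    · have := hwin (by simp only [coe_Icc, Set.mem_Icc]; omega)
        (by simp only [coe_Icc, Set.mem_Icc]; omega) hxu
      omega
  rw [rho, hlast, card_image_of_injOn hwin, Nat.card_Icc]
  omega

lemma rho_cyclic (hn : 0 < n) (ht : n < t) :
    rho (fun s => (s - 1) % n + 1) t ((t - 1) % n + 1) = n := by
  refine rho_eq_of_periodic (x := fun s => (s - 1) % n + 1) hn (fun s hs => ?_) (fun s hs => ?_) ht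
  · simp [show s + n - 1 = s - 1 + n by omega]
  · intro u hu v hv huv
    have := Nat.mod_injOn_Ico (s - 1) n (x₁ := u - 1) (x₂ := v - 1)
      (by simp only [Set.mem_Ico, coe_Ico] at hu ⊢; omega)
      (by simp only [Set.mem_Ico, coe_Ico] at hv ⊢; omega) (by simpa using huv)
    simp only [Set.mem_Ico] at hu hv
    omega

lemma le_wsBound_cyclic (hn : 2 ≤ n) (r : ℕ) :
    ((r * n - n : ℕ) : ℝ) * Real.logb 2 n ≤ wsBound (r * n) (fun t => (t - 1) % n + 1) := by
  calc ((r * n - n : ℕ) : ℝ) * Real.logb 2 n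
      = ∑ t ∈ Ioc n (r * n),
          Real.logb 2 ((max 2 (rho (fun s => (s - 1) % n + 1) t ((t - 1) % n + 1)) : ℕ) : ℝ) := by
        rw [sum_congr rfl fun t ht => by rw [rho_cyclic (by omega) (mem_Ioc.mp ht).1,
          max_eq_right hn], sum_const, Nat.card_Ioc, nsmul_eq_mul]
    _ ≤ wsBound (r * n) (fun t => (t - 1) % n + 1) := by
        refine sum_le_sum_of_subset_of_nonneg (fun t ht => ?_) fun t _ _ => ?_
        · simp only [mem_Ioc, mem_Icc] at ht ⊢
          omega
        · exact Real.logb_nonneg one_lt_two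
            (by exact_mod_cast le_trans one_le_two (le_max_left _ _))

end WorkingSet

namespace BTree

def spine (a : ℕ) : ℕ → BTree ℕ
  | 0 => .leaf
  | k + 1 => .node .leaf a (spine (a + 1) k)

lemma keys_spine (a k : ℕ) : (spine a k).keys = Ico a (a + k) := by
  induction k generalizing a with
  | zero => simp [spine, keys]
  | succ k ih =>
    ext b
    simp only [spine, keys, ih, mem_insert, mem_union, mem_Ico, notMem_empty, false_or]
    omega

lemma isBST_spine (a k : ℕ) : (spine a k).IsBST := by
  induction k generalizing a with
  | zero => trivial
  | succ k ih =>
    refine ⟨by simp [keys], fun y hy => ?_, trivial, ih (a + 1)⟩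
    rw [keys_spine, mem_Ico] at hy
    omega

lemma depth_spine {a k b : ℕ} (hab : a ≤ b) (hb : b < a + k) : (spine a k).depth b = b - a := by
  induction k generalizing a with
  | zero => omega
  | succ k ih =>
    simp only [spine, depth]
    split_ifs <;> first | omega | rw [ih (by omega) (by omega)]; omega

lemma dist_spine {a k b c : ℕ} (hab : a ≤ b) (hac : a ≤ c) (hb : b < a + k) (hc : c < a + k) :
    (spine a k).dist b c = Nat.dist b c := by
  induction k generalizing a with
  | zero => omega
  | succ k ih =>
    have hdepth := fun d (had : a ≤ d) (hd : d < a + (k + 1)) => depth_spine had hd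
    simp only [spine, dist] at hdepth ⊢
    split_ifs with hbc
    · simp [hbc]
    · omega
    · exact ih (by omega) (by omega) (by omega) (by omega)
    · rw [hdepth b hab hb, hdepth c hac hc, Nat.dist]
      omega

end BTree

lemma fingerOpt_le_fingerCost {α : Type} [LinearOrder α] (T : BTree α) (k m : ℕ) (X : ℕ → α)
    (f : ℕ → Fin k) (init : Fin k → α) : fingerOpt T k m X ≤ fingerCost T k m X f init :=
  Nat.sInf_le ⟨f, init, rfl⟩

lemma fingerPos_succ_of_eq {α : Type} {k : ℕ} {X : ℕ → α} {f : ℕ → Fin k} {init : Fin k → α}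
    {i : Fin k} {t : ℕ} (h : f t = i) : fingerPos X f init i (t + 1) = X t :=
  if_pos h

lemma sum_range_mul_of_periodic {M : Type*} [AddCommMonoid M] {g : ℕ → M} {n : ℕ}
    (hg : Function.Periodic g n) (r : ℕ) :
    ∑ t ∈ range (r * n), g t = r • ∑ t ∈ range n, g t := by
  induction r with
  | zero => simp
  | succ r ih =>
    rw [Nat.succ_mul, sum_range_add, ih, succ_nsmul]
    congr 1
    exact sum_congr rfl fun t _ => by simpa [add_comm] using hg.nat_mul r t

lemma add_one_mod_eq_of_ne_zero {t n : ℕ} (h : (t + 1) % n ≠ 0) : (t + 1) % n = t % n + 1 := by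
  rcases Nat.eq_zero_or_pos n with rfl | hn
  · simp
  have h1 : 1 % n = 1 := Nat.one_mod_eq_one.mpr (by rintro rfl; exact h (Nat.mod_one _))
  have := Nat.mod_lt t hn
  rw [Nat.add_mod_eq_ite, h1] at h ⊢
  split_ifs at h ⊢ <;> omega

section CyclicSweep

variable {n : ℕ}

lemma cyclic_sweep_step_le (hn : 0 < n) (t : ℕ) :
    1 + (BTree.spine 1 n).dist
        (fingerPos (fun t => t % n + 1) (fun _ => (0 : Fin 1)) (fun _ => 1) 0 t) (t % n + 1)
      ≤ if t % n = 0 then n else 2 := by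
  cases t with
  | zero =>
    rw [fingerPos, Nat.zero_mod, BTree.dist_spine le_rfl le_rfl (by omega) (by omega),
      Nat.dist_self, if_pos rfl]
    omega
  | succ t =>
    have := Nat.mod_lt t hn
    have := Nat.mod_lt (t + 1) hn
    rw [fingerPos_succ_of_eq rfl, BTree.dist_spine (by omega) (by omega) (by omega) (by omega)]
    split_ifs with hwrap
    · rw [hwrap, Nat.dist]
      omega
    · rw [add_one_mod_eq_of_ne_zero hwrap, Nat.dist]
      omega

lemma sum_range_cyclic_step_bound (hn : 0 < n) :
    ∑ t ∈ range n, (if t % n = 0 then n else 2) ≤ 3 * n := by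
  obtain ⟨k, rfl⟩ := Nat.exists_eq_add_one_of_ne_zero hn.ne'
  have hstep : ∀ i ∈ range k, (if (i + 1) % (k + 1) = 0 then k + 1 else 2) = 2 := fun i hi =>
    if_neg (by rw [Nat.mod_eq_of_lt (by simp only [mem_range] at hi; omega)]; omega)
  rw [sum_range_succ', sum_congr rfl hstep, sum_const, card_range, smul_eq_mul, Nat.zero_mod,
    if_pos rfl]
  omega

lemma fingerCost_spine_cyclic_le (hn : 0 < n) (r : ℕ) :
    fingerCost (BTree.spine 1 n) 1 (r * n) (fun t => t % n + 1) (fun _ => (0 : Fin 1)) (fun _ => 1)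
      ≤ 3 * (r * n) := by
  calc _ ≤ ∑ t ∈ range (r * n), (if t % n = 0 then n else 2) :=
        sum_le_sum fun t _ => cyclic_sweep_step_le hn t
    _ = r * ∑ t ∈ range n, (if t % n = 0 then n else 2) :=
        sum_range_mul_of_periodic (fun t => by simp) r
    _ ≤ r * (3 * n) := Nat.mul_le_mul_left r (sum_range_cyclic_step_bound hn)
    _ = 3 * (r * n) := by ring

end CyclicSweep

theorem stmt14_general (n r : ℕ) (hn : 2 ≤ n) :
    ((r * n - n : ℕ) : ℝ) * Real.logb 2 (n : ℝ) ≤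
        wsBound (r * n) (fun t => (t - 1) % n + 1) ∧
      ∃ T : BTree ℕ, T.IsBST ∧ T.keys = Finset.Icc 1 n ∧
        fingerOpt T 1 (r * n) (fun t => t % n + 1) ≤ 3 * (r * n) := by
  refine ⟨le_wsBound_cyclic hn r, BTree.spine 1 n, BTree.isBST_spine 1 n, ?_, ?_⟩
  · rw [BTree.keys_spine, add_comm, Finset.Ico_add_one_right_eq_Icc]
  · exact (fingerOpt_le_fingerCost _ _ _ _ _ _).trans (fingerCost_spine_cyclic_le (by omega) r)

/-- For `n ≥ 2`, `r ≥ 1`, `m = r·n`, and `S'` the concatenation of `r`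
copies of `(1, 2, …, n)` (so the `t`-th access, `1 ≤ t ≤ m`, is `(t−1) mod n + 1`), the
working-set bound satisfies `WS(S') ≥ (m − n)·log₂ n`, while some BST `T` on `[n]` has
one-finger cost `F^1_T(S') ≤ 3m`. -/
theorem stmt14 (n r : ℕ) (hn : 2 ≤ n) (hr : 1 ≤ r) :
    ((r * n - n : ℕ) : ℝ) * Real.logb 2 (n : ℝ) ≤
        wsBound (r * n) (fun t => (t - 1) % n + 1) ∧
      ∃ T : BTree ℕ, T.IsBST ∧ T.keys = Finset.Icc 1 n ∧
        fingerOpt T 1 (r * n) (fun t => t % n + 1) ≤ 3 * (r * n) :=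
  stmt14_general n r hn
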